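/- Let D, P, W be as in the homological-equation lemma ([W,D] + P − diag P = 0 with ‖W‖_r ≤ (3/2)‖P‖_r for some fixed constant c = 3/2 coming from the spectral gap |d_n − d_m| ≥ 2/3). Then the conjugated operator e^W (D + P) e^{−W} equals D_+ + P_+ where D_+ = D + diag P and ‖P_+‖_r ≤ (117/8)‖P‖_r² · e^{(78/8)‖P‖_r}. -/

import Mathlib

open NormedSpace

set_option linter.unusedSectionVars false

section Aux

variable {A : Type*} [NormedRing A] [NormedAlgebra ℝ A] [CompleteSpace A]

lemma aux_comm_pow (D W Q : A) (h : D * W - W * D = Q) :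
    ∀ n : ℕ, ‖D * W ^ (n + 1) - W ^ (n + 1) * D‖ ≤ (n + 1) * ‖Q‖ * ‖W‖ ^ n := by
  intro n
  induction n with
  | zero => simpa using le_of_eq (by rw [h])
  | succ n ih =>
    have hid : D * W ^ (n + 2) - W ^ (n + 2) * D
        = (D * W ^ (n + 1) - W ^ (n + 1) * D) * W + W ^ (n + 1) * (D * W - W * D) := by
      noncomm_ring
    rw [hid, h]
    have h1 : ‖(D * W ^ (n + 1) - W ^ (n + 1) * D) * W‖
        ≤ ((n + 1) * ‖Q‖ * ‖W‖ ^ n) * ‖W‖ :=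
      (norm_mul_le _ _).trans (by gcongr)
    have h2 : ‖W ^ (n + 1) * Q‖ ≤ ‖W‖ ^ (n + 1) * ‖Q‖ :=
      (norm_mul_le _ _).trans (by gcongr; exact norm_pow_le' W n.succ_pos)
    calc ‖(D * W ^ (n + 1) - W ^ (n + 1) * D) * W + W ^ (n + 1) * Q‖
        ≤ ‖(D * W ^ (n + 1) - W ^ (n + 1) * D) * W‖ + ‖W ^ (n + 1) * Q‖ := norm_add_le _ _
      _ ≤ ((n + 1) * ‖Q‖ * ‖W‖ ^ n) * ‖W‖ + ‖W‖ ^ (n + 1) * ‖Q‖ := add_le_add h1 h2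
      _ = (n + 1 + 1) * ‖Q‖ * ‖W‖ ^ (n + 1) := by ring
      _ = ((n + 1 : ℕ) + 1) * ‖Q‖ * ‖W‖ ^ (n + 1) := by push_cast; ring
    
lemma aux_tail (a : ℝ) : ∑' n : ℕ, a ^ (n + 1) / (Nat.factorial (n + 1)) = Real.exp a - 1 := by
  have hs := Real.summable_pow_div_factorial a
  have h0 : Real.exp a = ∑' n : ℕ, a ^ n / (Nat.factorial n) := by
    rw [Real.exp_eq_exp_ℝ, exp_eq_tsum_div]
  rw [h0, Summable.tsum_eq_zero_add hs]
  simp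

lemma aux_hs_exp (a : ℝ) : HasSum (fun n : ℕ => a ^ n / (Nat.factorial n)) (Real.exp a) := by
  have hs := Real.summable_pow_div_factorial a
  have h0 : Real.exp a = ∑' n : ℕ, a ^ n / (Nat.factorial n) := by
    rw [Real.exp_eq_exp_ℝ, exp_eq_tsum_div]
  rw [h0]
  exact hs.hasSum

lemma aux_hs_tail (a : ℝ) :
    HasSum (fun n : ℕ => a ^ (n + 1) / (Nat.factorial (n + 1))) (Real.exp a - 1) := by
  have hs : Summable (fun n : ℕ => a ^ (n + 1) / (Nat.factorial (n + 1))) :=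
    (summable_nat_add_iff 1).2 (Real.summable_pow_div_factorial a)
  have := hs.hasSum
  rwa [aux_tail a] at this

lemma aux_exp_split (W : A) :
    exp W = 1 + ∑' n : ℕ, ((Nat.factorial (n + 1) : ℝ)⁻¹) • W ^ (n + 1) := by
  rw [exp_eq_tsum ℝ]
  show (∑' n : ℕ, ((Nat.factorial n : ℝ)⁻¹) • W ^ n) = _
  rw [Summable.tsum_eq_zero_add (expSeries_summable' (𝕂 := ℝ) W)]
  simp

lemma aux_norm_exp_sub_one (W : A) : ‖exp W - 1‖ ≤ Real.exp ‖W‖ - 1 := by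
  have h := aux_exp_split W
  have : exp W - 1 = ∑' n : ℕ, ((Nat.factorial (n + 1) : ℝ)⁻¹) • W ^ (n + 1) := by
    rw [h]; abel
  rw [this]
  refine tsum_of_norm_bounded (aux_hs_tail ‖W‖) fun n => ?_
  rw [norm_smul, norm_inv, Real.norm_natCast, div_eq_inv_mul]
  gcongr
  exact norm_pow_le' W n.succ_pos

lemma aux_comm_exp (D W Q : A) (h : D * W - W * D = Q) :
    ‖D * exp W - exp W * D - Q‖ ≤ ‖Q‖ * (Real.exp ‖W‖ - 1) := by
  set φ : A →L[ℝ] A :=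
    ContinuousLinearMap.mul ℝ A D - (ContinuousLinearMap.mul ℝ A).flip D with hφdef
  have hφ : ∀ X : A, φ X = D * X - X * D := fun X => by
    simp [hφdef, ContinuousLinearMap.sub_apply, ContinuousLinearMap.flip_apply,
      ContinuousLinearMap.mul_apply']
  set g : ℕ → A := fun n => φ ((Nat.factorial n : ℝ)⁻¹ • W ^ n) with hg
  have hsum := expSeries_summable' (𝕂 := ℝ) W
  have h1 : φ (exp W) = ∑' n : ℕ, g n := by
    rw [exp_eq_tsum ℝ]
    exact φ.map_tsum hsum
  have h2 : Summable g := hsum.mapL φ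
  have h3 : ∑' n : ℕ, g n = g 0 + (g 1 + ∑' n : ℕ, g (n + 1 + 1)) := by
    rw [Summable.tsum_eq_zero_add h2, Summable.tsum_eq_zero_add ((summable_nat_add_iff 1).2 h2)]
  have hg0 : g 0 = 0 := by simp [hg, hφ]
  have hg1 : g 1 = Q := by simpa [hg, hφ] using h
  have h4 : D * exp W - exp W * D - Q = ∑' n : ℕ, g (n + 1 + 1) := by
    have := hφ (exp W)
    rw [h1, h3, hg0, hg1] at this
    rw [← this]; abel
  rw [h4]
  refine tsum_of_norm_bounded ((aux_hs_tail ‖W‖).mul_left ‖Q‖) fun n => ?_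
  have hb : ‖g (n + 1 + 1)‖
      ≤ (Nat.factorial (n + 2) : ℝ)⁻¹ * ((n + 1 + 1) * ‖Q‖ * ‖W‖ ^ (n + 1)) := by
    simp only [hg, hφ, mul_smul_comm, smul_mul_assoc, ← smul_sub]
    rw [norm_smul, norm_inv, Real.norm_natCast]
    have h5 := aux_comm_pow D W Q h (n + 1)
    have hnn : (0:ℝ) ≤ ((Nat.factorial (n + 1 + 1) : ℝ))⁻¹ := by positivity
    refine (mul_le_mul_of_nonneg_left h5 hnn).trans (le_of_eq ?_)
    push_cast
    ring
  refine hb.trans (le_of_eq ?_)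
  have hfac : (Nat.factorial (n + 2) : ℝ) = (n + 2) * (Nat.factorial (n + 1) : ℝ) := by
    rw [Nat.factorial_succ]; push_cast; ring
  have hne : (Nat.factorial (n + 1) : ℝ) ≠ 0 := by positivity
  rw [hfac]
  field_simp
  ring

lemma aux_exp_sub_one_le (y : ℝ) : Real.exp y - 1 ≤ y * Real.exp y := by
  have h1 : Real.exp y * Real.exp (-y) = 1 := by
    rw [← Real.exp_add]; simp
  have h2 : -y + 1 ≤ Real.exp (-y) := Real.add_one_le_exp (-y)
  nlinarith [Real.exp_pos y, mul_le_mul_of_nonneg_left h2 (Real.exp_pos y).le]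

end Aux

/-- in a Banach algebra, if `W` solves the homological equation
`[W,D] + P − diag P = 0` (with `Pd` playing the role of `diag P`, so `‖P − Pd‖ ≤ ‖P‖`) and
`‖W‖ ≤ (3/2)‖P‖`, then `e^W (D + P) e^{−W} = D₊ + P₊` with `D₊ = D + diag P` and
`‖P₊‖ ≤ (117/8)‖P‖² e^{(78/8)‖P‖}`. -/
theorem stmt6 {A : Type*} [NormedRing A] [NormedAlgebra ℝ A] [CompleteSpace A]
    (D P Pd W : A)
    (hhom : W * D - D * W + P - Pd = 0)
    (hPd : ‖P - Pd‖ ≤ ‖P‖)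
    (hW : ‖W‖ ≤ 3 / 2 * ‖P‖) :
    ∃ Pplus : A,
      exp W * (D + P) * exp (-W) = (D + Pd) + Pplus ∧
      ‖Pplus‖ ≤ 117 / 8 * ‖P‖ ^ 2 * Real.exp (78 / 8 * ‖P‖) := by
  have hQ : D * W - W * D = P - Pd := by
    have h : D * W - W * D - (P - Pd) = -(W * D - D * W + P - Pd) := by abel
    rw [hhom, neg_zero] at h
    exact sub_eq_zero.mp h
  have hQ' : D * (-W) - (-W) * D = -(P - Pd) := by
    rw [mul_neg, neg_mul, neg_sub_neg, ← neg_sub, hQ]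
  set C : A := D * exp (-W) - exp (-W) * D with hC
  have hCbound : ‖C + (P - Pd)‖ ≤ ‖P - Pd‖ * (Real.exp ‖W‖ - 1) := by
    have h := aux_comm_exp D (-W) (-(P - Pd)) hQ'
    rw [norm_neg, norm_neg, sub_neg_eq_add] at h
    exact h
  have hmul : exp W * exp (-W) = 1 := by
    letI : NormedAlgebra ℚ A := NormedAlgebra.restrictScalars ℚ ℝ A
    rw [← exp_add_of_commute ((Commute.refl W).neg_right), add_neg_cancel, exp_zero]
  refine ⟨exp W * C + (P - Pd) + (exp W * P * exp (-W) - P), ?_, ?_⟩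
  · have hDe : D * exp (-W) = exp (-W) * D + C := by rw [hC]; abel
    calc exp W * (D + P) * exp (-W)
        = exp W * (D * exp (-W)) + exp W * P * exp (-W) := by noncomm_ring
      _ = exp W * (exp (-W) * D + C) + exp W * P * exp (-W) := by rw [hDe]
      _ = exp W * exp (-W) * D + exp W * C + exp W * P * exp (-W) := by
          noncomm_ring
      _ = D + exp W * C + exp W * P * exp (-W) := by rw [hmul, one_mul]
      _ = (D + Pd) + (exp W * C + (P - Pd) + (exp W * P * exp (-W) - P)) := by abel
  · set a := ‖W‖ with ha
    set p := ‖P‖ with hp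
    set q := ‖P - Pd‖ with hq
    have hp0 : 0 ≤ p := norm_nonneg _
    have ha0 : 0 ≤ a := norm_nonneg _
    have hq0 : 0 ≤ q := norm_nonneg _
    set E := Real.exp a with hE
    have hE1 : 1 ≤ E := Real.one_le_exp ha0
    have hu : ‖exp W - 1‖ ≤ E - 1 := aux_norm_exp_sub_one W
    have hv : ‖exp (-W) - 1‖ ≤ E - 1 := by
      have h := aux_norm_exp_sub_one (-W)
      rwa [norm_neg] at h
    have hCn : ‖C‖ ≤ q * E := by
      calc ‖C‖ = ‖C + (P - Pd) - (P - Pd)‖ := by rw [add_sub_cancel_right]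
        _ ≤ ‖C + (P - Pd)‖ + ‖P - Pd‖ := norm_sub_le _ _
        _ ≤ q * (E - 1) + q := add_le_add hCbound le_rfl
        _ = q * E := by ring
    have hpart1 : ‖exp W * C + (P - Pd)‖ ≤ (E - 1) * (q * E) + q * (E - 1) := by
      have hid : exp W * C + (P - Pd) = (exp W - 1) * C + (C + (P - Pd)) := by
        noncomm_ring
      rw [hid]
      calc ‖(exp W - 1) * C + (C + (P - Pd))‖
          ≤ ‖(exp W - 1) * C‖ + ‖C + (P - Pd)‖ := norm_add_le _ _
        _ ≤ ‖exp W - 1‖ * ‖C‖ + q * (E - 1) := add_le_add (norm_mul_le _ _) hCbound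
        _ ≤ (E - 1) * (q * E) + q * (E - 1) :=
            add_le_add (mul_le_mul hu hCn (norm_nonneg _) (by linarith)) le_rfl
    have hpart2 : ‖exp W * P * exp (-W) - P‖
        ≤ (E - 1) * p + p * (E - 1) + (E - 1) * p * (E - 1) := by
      have hid : exp W * P * exp (-W) - P
          = (exp W - 1) * P + P * (exp (-W) - 1)
            + (exp W - 1) * P * (exp (-W) - 1) := by noncomm_ring
      rw [hid]
      have t1 : ‖(exp W - 1) * P‖ ≤ (E - 1) * p :=
        (norm_mul_le _ _).trans (mul_le_mul_of_nonneg_right hu (norm_nonneg _))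
      have t2 : ‖P * (exp (-W) - 1)‖ ≤ p * (E - 1) :=
        (norm_mul_le _ _).trans (mul_le_mul_of_nonneg_left hv (norm_nonneg _))
      have t3 : ‖(exp W - 1) * P * (exp (-W) - 1)‖ ≤ (E - 1) * p * (E - 1) := by
        refine (norm_mul_le _ _).trans ?_
        exact mul_le_mul t1 hv (norm_nonneg _) (mul_nonneg (by linarith) hp0)
      calc ‖(exp W - 1) * P + P * (exp (-W) - 1) + (exp W - 1) * P * (exp (-W) - 1)‖
          ≤ ‖(exp W - 1) * P + P * (exp (-W) - 1)‖
            + ‖(exp W - 1) * P * (exp (-W) - 1)‖ := norm_add_le _ _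
        _ ≤ (‖(exp W - 1) * P‖ + ‖P * (exp (-W) - 1)‖)
            + ‖(exp W - 1) * P * (exp (-W) - 1)‖ :=
            add_le_add (norm_add_le _ _) le_rfl
        _ ≤ (E - 1) * p + p * (E - 1) + (E - 1) * p * (E - 1) :=
            add_le_add (add_le_add t1 t2) t3
    have htot : ‖exp W * C + (P - Pd) + (exp W * P * exp (-W) - P)‖
        ≤ 2 * p * (E ^ 2 - 1) := by
      calc ‖exp W * C + (P - Pd) + (exp W * P * exp (-W) - P)‖
          ≤ ‖exp W * C + (P - Pd)‖ + ‖exp W * P * exp (-W) - P‖ := norm_add_le _ _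
        _ ≤ ((E - 1) * (q * E) + q * (E - 1))
            + ((E - 1) * p + p * (E - 1) + (E - 1) * p * (E - 1)) := add_le_add hpart1 hpart2
        _ ≤ 2 * p * (E ^ 2 - 1) := by
            have hEe : (0:ℝ) ≤ E - 1 := by linarith
            have h1 : q * ((E - 1) * E) ≤ p * ((E - 1) * E) :=
              mul_le_mul_of_nonneg_right hPd (mul_nonneg hEe (by linarith))
            have h2 : q * (E - 1) ≤ p * (E - 1) := mul_le_mul_of_nonneg_right hPd hEe
            nlinarith [h1, h2]
    refine htot.trans ?_
    have hE2 : E ^ 2 ≤ Real.exp (3 * p) := by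
      rw [hE, sq, ← Real.exp_add]
      apply Real.exp_le_exp.mpr
      linarith [hW]
    have hkey : Real.exp (3 * p) - 1 ≤ 3 * p * Real.exp (3 * p) := aux_exp_sub_one_le (3 * p)
    have hmono : Real.exp (3 * p) ≤ Real.exp (78 / 8 * p) := by
      apply Real.exp_le_exp.mpr; linarith
    have hpos := Real.exp_pos (3 * p)
    calc 2 * p * (E ^ 2 - 1) ≤ 2 * p * (Real.exp (3 * p) - 1) := by nlinarith
      _ ≤ 2 * p * (3 * p * Real.exp (3 * p)) := by nlinarith
      _ = 6 * p ^ 2 * Real.exp (3 * p) := by ring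
      _ ≤ 117 / 8 * p ^ 2 * Real.exp (78 / 8 * p) := by nlinarith [sq_nonneg p, hmono, hpos]
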